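/- arXiv:2604.19213 — 13 statements merged into one kernel-verified Lean document; each statement's English description precedes it below -/
import Mathlib

section
/- Let ℓ ∈ {1, 2, 3} and set M = ℓ²/(4ℓ − 1). If a, b are real numbers with −1/2 ≤ a ≤ 1/2, −1/2 ≤ b ≤ 1/2 and a·b ≤ 0 (i.e. a and b have opposite signs), then f_ℓ(a, b) ≤ M. -/
/-- For ℓ ∈ {1,2,3} and M = ℓ²/(4ℓ−1), if a, b ∈ [−1/2, 1/2]
have opposite signs (a·b ≤ 0), then f_ℓ(a,b) = a² + a·b + ℓ·b² ≤ M. -/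
theorem stmt_0 (ℓ : ℕ) (hℓ : ℓ = 1 ∨ ℓ = 2 ∨ ℓ = 3) (a b : ℝ)
    (ha₁ : -(1/2) ≤ a) (ha₂ : a ≤ 1/2) (hb₁ : -(1/2) ≤ b) (hb₂ : b ≤ 1/2)
    (hab : a * b ≤ 0) :
    a ^ 2 + a * b + (ℓ : ℝ) * b ^ 2 ≤ (ℓ : ℝ) ^ 2 / (4 * (ℓ : ℝ) - 1) := by
  rcases hℓ with h | h | h <;> subst h <;> push_cast <;> norm_num <;>
    nlinarith [sq_nonneg (a+b), sq_nonneg (a-b), mul_nonneg (sub_nonneg.2 ha₂) (sub_nonneg.2 hb₂), mul_nonneg (by linarith : (0:ℝ) ≤ a + 1/2) (by linarith : (0:ℝ) ≤ b + 1/2), sq_nonneg a, sq_nonneg b]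
end

section
/- Let ℓ ∈ {1, 2, 3} and set M = ℓ²/(4ℓ − 1). The point I = (ℓ/(4ℓ − 1), (2ℓ − 1)/(4ℓ − 1)) lies on the boundary of all three ellipses E_{0,0}, E_{1,0}, E_{0,1}; that is, f_ℓ(ℓ/(4ℓ−1), (2ℓ−1)/(4ℓ−1)) = M, f_ℓ(ℓ/(4ℓ−1) − 1, (2ℓ−1)/(4ℓ−1)) = M, and f_ℓ(ℓ/(4ℓ−1), (2ℓ−1)/(4ℓ−1) − 1) = M. -/
/-- For ℓ ∈ {1,2,3} and M = ℓ²/(4ℓ−1), the point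
I = (ℓ/(4ℓ−1), (2ℓ−1)/(4ℓ−1)) lies on the boundaries of the three ellipses
E_{0,0}, E_{1,0}, E_{0,1}. -/
theorem stmt_1 (ℓ : ℕ) (hℓ : ℓ = 1 ∨ ℓ = 2 ∨ ℓ = 3) :
    let f : ℝ → ℝ → ℝ := fun x y => x ^ 2 + x * y + (ℓ : ℝ) * y ^ 2
    let M : ℝ := (ℓ : ℝ) ^ 2 / (4 * (ℓ : ℝ) - 1)
    let xI : ℝ := (ℓ : ℝ) / (4 * (ℓ : ℝ) - 1)
    let yI : ℝ := (2 * (ℓ : ℝ) - 1) / (4 * (ℓ : ℝ) - 1)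
    f xI yI = M ∧ f (xI - 1) yI = M ∧ f xI (yI - 1) = M := by
  rcases hℓ with h | h | h <;> subst h <;>
    refine ⟨?_, ?_, ?_⟩ <;> push_cast <;> norm_num
end

section
/- Let ℓ ∈ {1, 2, 3} and set M = ℓ²/(4ℓ − 1). The point I = (ℓ/(4ℓ − 1), (2ℓ − 1)/(4ℓ − 1)) is the unique pair of real numbers (x, y) satisfying simultaneously f_ℓ(x, y) = M, f_ℓ(x − 1, y) = M and f_ℓ(x, y − 1) = M. -/
/-- For ℓ ∈ {1,2,3} and M = ℓ²/(4ℓ−1), the point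
I = (ℓ/(4ℓ−1), (2ℓ−1)/(4ℓ−1)) is the unique real pair (x, y) with
f_ℓ(x,y) = M, f_ℓ(x−1,y) = M and f_ℓ(x,y−1) = M. -/
theorem stmt_2 (ℓ : ℕ) (hℓ : ℓ = 1 ∨ ℓ = 2 ∨ ℓ = 3) :
    let f : ℝ → ℝ → ℝ := fun x y => x ^ 2 + x * y + (ℓ : ℝ) * y ^ 2
    let M : ℝ := (ℓ : ℝ) ^ 2 / (4 * (ℓ : ℝ) - 1)
    ∀ x y : ℝ,
      (f x y = M ∧ f (x - 1) y = M ∧ f x (y - 1) = M) ↔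
        (x = (ℓ : ℝ) / (4 * (ℓ : ℝ) - 1) ∧
         y = (2 * (ℓ : ℝ) - 1) / (4 * (ℓ : ℝ) - 1)) := by
  rcases hℓ with h | h | h <;> subst h <;>
    intro f M x y <;> simp only [f, M] <;> push_cast <;> constructor
  · rintro ⟨h1, h2, h3⟩
    have ha : 2 * x + y - 1 = 0 := by linear_combination h1 - h2
    have hb : x + 1 * (2 * y - 1) = 0 := by linear_combination h1 - h3
    constructor <;> [linarith; linarith]
  · rintro ⟨hx, hy⟩; subst hx; subst hy; norm_num
  · rintro ⟨h1, h2, h3⟩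
    have ha : 2 * x + y - 1 = 0 := by linear_combination h1 - h2
    have hb : x + 2 * (2 * y - 1) = 0 := by linear_combination h1 - h3
    constructor <;> [linarith; linarith]
  · rintro ⟨hx, hy⟩; subst hx; subst hy; norm_num
  · rintro ⟨h1, h2, h3⟩
    have ha : 2 * x + y - 1 = 0 := by linear_combination h1 - h2
    have hb : x + 3 * (2 * y - 1) = 0 := by linear_combination h1 - h3
    constructor <;> [linarith; linarith]
  · rintro ⟨hx, hy⟩; subst hx; subst hy; norm_num
end

section
/- For all real numbers x, y with 0 ≤ x ≤ 1/2 and 0 ≤ y ≤ 1/2, at least one of the following holds: x² + x·y + y² ≤ 1/3, or x² + x·(y − 1) + (y − 1)² ≤ 1/3, or (x − 1)² + (x − 1)·y + y² ≤ 1/3. (This is the case m = −3, ℓ = 1 of the covering of the square S₀ = [0, 1/2]² by the three ellipses E_{0,0}, E_{0,1}, E_{1,0}.) -/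
/-- covering of [0,1/2]² by the three ellipses for m = −3, ℓ = 1. -/
theorem stmt_3 (x y : ℝ) (hx₁ : 0 ≤ x) (hx₂ : x ≤ 1/2) (hy₁ : 0 ≤ y) (hy₂ : y ≤ 1/2) :
    x ^ 2 + x * y + y ^ 2 ≤ 1/3 ∨
    x ^ 2 + x * (y - 1) + (y - 1) ^ 2 ≤ 1/3 ∨
    (x - 1) ^ 2 + (x - 1) * y + y ^ 2 ≤ 1/3 := by
  by_contra h
  push_neg at h
  obtain ⟨h1, h2, h3⟩ := h
  nlinarith [sq_nonneg (x - y), sq_nonneg (x + y), sq_nonneg (x + y - 2/3), mul_nonneg hx₁ hy₁, sq_nonneg (x - 1/2), sq_nonneg (y - 1/2)]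
end

section
/- For all real numbers x, y with 0 ≤ x ≤ 1/2 and 0 ≤ y ≤ 1/2, at least one of the following holds: x² + x·y + 2·y² ≤ 4/7, or x² + x·(y − 1) + 2·(y − 1)² ≤ 4/7, or (x − 1)² + (x − 1)·y + 2·y² ≤ 4/7. (This is the case m = −7, ℓ = 2 of the covering of the square S₀ = [0, 1/2]² by the three ellipses E_{0,0}, E_{0,1}, E_{1,0}.) -/
/-- covering of [0,1/2]² by the three ellipses for m = −7, ℓ = 2. -/
theorem stmt_4 (x y : ℝ) (hx₁ : 0 ≤ x) (hx₂ : x ≤ 1/2) (hy₁ : 0 ≤ y) (hy₂ : y ≤ 1/2) :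
    x ^ 2 + x * y + 2 * y ^ 2 ≤ 4/7 ∨
    x ^ 2 + x * (y - 1) + 2 * (y - 1) ^ 2 ≤ 4/7 ∨
    (x - 1) ^ 2 + (x - 1) * y + 2 * y ^ 2 ≤ 4/7 := by
  by_cases h1 : x ^ 2 + x * y + 2 * y ^ 2 ≤ 4/7
  · exact Or.inl h1
  by_cases h2 : x ^ 2 + x * (y - 1) + 2 * (y - 1) ^ 2 ≤ 4/7
  · exact Or.inr (Or.inl h2)
  push_neg at h1 h2
  refine Or.inr (Or.inr ?_)
  nlinarith [sq_nonneg (x - y), sq_nonneg (x + y), sq_nonneg (x - 1/2), sq_nonneg (y - 1/2), mul_nonneg hx₁ hy₁]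
end

section
/- For all real numbers x, y with 0 ≤ x ≤ 1/2 and 0 ≤ y ≤ 1/2, at least one of the following holds: x² + x·y + 3·y² ≤ 9/11, or x² + x·(y − 1) + 3·(y − 1)² ≤ 9/11, or (x − 1)² + (x − 1)·y + 3·y² ≤ 9/11. (This is the case m = −11, ℓ = 3 of the covering of the square S₀ = [0, 1/2]² by the three ellipses E_{0,0}, E_{0,1}, E_{1,0}.) -/
/-- covering of [0,1/2]² by the three ellipses for m = −11, ℓ = 3. -/
theorem stmt_5 (x y : ℝ) (hx₁ : 0 ≤ x) (hx₂ : x ≤ 1/2) (hy₁ : 0 ≤ y) (hy₂ : y ≤ 1/2) :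
    x ^ 2 + x * y + 3 * y ^ 2 ≤ 9/11 ∨
    x ^ 2 + x * (y - 1) + 3 * (y - 1) ^ 2 ≤ 9/11 ∨
    (x - 1) ^ 2 + (x - 1) * y + 3 * y ^ 2 ≤ 9/11 := by
  rcases le_or_gt (2*x + y) 1 with h1 | h1
  · rcases le_or_gt (x + 6*y) 3 with h2 | h2
    · left
      nlinarith [mul_nonneg (sub_nonneg.2 h1) (sub_nonneg.2 h2),
        mul_nonneg (sub_nonneg.2 h1) hx₁, mul_nonneg (sub_nonneg.2 h1) hy₁,
        mul_nonneg (sub_nonneg.2 h2) hx₁, mul_nonneg (sub_nonneg.2 h2) hy₁,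
        mul_nonneg hx₁ hy₁, sq_nonneg (x - y), sq_nonneg (11*x - 3), sq_nonneg (11*y - 5)]
    · -- here x - 5y = (2x+y) - (x+6y) < 1 - 3 = -2, use middle ellipse
      right; left
      nlinarith [mul_nonneg (sub_nonneg.2 h1) hx₁, mul_nonneg (sub_nonneg.2 h1) hy₁,
        mul_nonneg (le_of_lt (sub_pos.2 h2)) hx₁, mul_nonneg (le_of_lt (sub_pos.2 h2)) hy₁,
        mul_nonneg (sub_nonneg.2 h1) (le_of_lt (sub_pos.2 h2)),
        mul_nonneg hx₁ hy₁, sq_nonneg (x - y), sq_nonneg (11*x - 3), sq_nonneg (11*y - 5)]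
  · rcases le_total x (5*y - 2) with h2 | h2
    · -- x+6y = (2x+y) - (x-5y) > 1 + 2 = 3, use middle ellipse
      right; left
      nlinarith [mul_nonneg (le_of_lt (sub_pos.2 h1)) hx₁,
        mul_nonneg (le_of_lt (sub_pos.2 h1)) hy₁,
        mul_nonneg (sub_nonneg.2 h2) hx₁, mul_nonneg (sub_nonneg.2 h2) hy₁,
        mul_nonneg (le_of_lt (sub_pos.2 h1)) (sub_nonneg.2 h2),
        mul_nonneg hx₁ hy₁, sq_nonneg (x - y), sq_nonneg (11*x - 3), sq_nonneg (11*y - 5)]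
    · right; right
      nlinarith [mul_nonneg (le_of_lt (sub_pos.2 h1)) hx₁,
        mul_nonneg (le_of_lt (sub_pos.2 h1)) hy₁,
        mul_nonneg (sub_nonneg.2 h2) hx₁, mul_nonneg (sub_nonneg.2 h2) hy₁,
        mul_nonneg (le_of_lt (sub_pos.2 h1)) (sub_nonneg.2 h2),
        mul_nonneg hx₁ hy₁, sq_nonneg (x - y), sq_nonneg (11*x - 3), sq_nonneg (11*y - 5)]
end

section
/- For all real numbers x, y with |x| ≤ y ≤ 1/2, at least one of the following holds: x² + x·y + y² ≤ 1/3, or x² + x·(y − 1) + (y − 1)² ≤ 1/3. (This is the key step in the proof of the covering proposition for m = −3: assuming both quantities exceed 1/3 yields y > 1/3 and (y − 1/3)(y − 2/3) > 0, a contradiction since y ≤ 1/2.) -/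
/-- key step of the covering proof for m = −3: if |x| ≤ y ≤ 1/2
then (x,y) is in E_{0,0} or E_{0,1}. -/
theorem stmt_6 (x y : ℝ) (hxy : |x| ≤ y) (hy : y ≤ 1/2) :
    x ^ 2 + x * y + y ^ 2 ≤ 1/3 ∨
    x ^ 2 + x * (y - 1) + (y - 1) ^ 2 ≤ 1/3 := by
  by_contra h
  push_neg at h
  obtain ⟨h1, h2⟩ := h
  rcases abs_le.mp hxy with ⟨hl, hr⟩
  nlinarith [sq_nonneg (x - y), sq_nonneg (x + y), sq_nonneg x, sq_nonneg (y - 1/2)]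
end

section
/- Let ℓ ∈ {1, 2, 3} and set M = ℓ²/(4ℓ − 1). For all real numbers a, b with −1/2 ≤ a ≤ 1/2 and −1/2 ≤ b ≤ 1/2, there exists a pair (δ_a, δ_b) among (0,0), (1,0), (−1,0), (0,1), (0,−1) such that f_ℓ(a + δ_a, b + δ_b) ≤ M. (That is, the five ellipses E_{0,0}, E_{±1,0}, E_{0,±1} cover the square [−1/2, 1/2]².) -/
set_option maxHeartbeats 1000000

/-- Key lemma: for `a, b ∈ [0, 1/2]` and `L ∈ {1,2,3}`, one of the three ellipses
`E_{0,0}`, `E_{-1,0}`, `E_{0,-1}` contains `(a,b)`. -/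
lemma stmt_7_aux (L : ℝ) (hL : L = 1 ∨ L = 2 ∨ L = 3) (a b : ℝ)
    (ha₁ : 0 ≤ a) (ha₂ : a ≤ 1/2) (hb₁ : 0 ≤ b) (hb₂ : b ≤ 1/2) :
    a ^ 2 + a * b + L * b ^ 2 ≤ L ^ 2 / (4 * L - 1) ∨
    (a - 1) ^ 2 + (a - 1) * b + L * b ^ 2 ≤ L ^ 2 / (4 * L - 1) ∨
    a ^ 2 + a * (b - 1) + L * (b - 1) ^ 2 ≤ L ^ 2 / (4 * L - 1) := by
  rcases le_or_gt (a ^ 2 + a * b + L * b ^ 2) (L ^ 2 / (4 * L - 1)) with h0 | h0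
  · exact Or.inl h0
  rcases le_or_gt ((a - 1) ^ 2 + (a - 1) * b + L * b ^ 2) (L ^ 2 / (4 * L - 1)) with h1 | h1
  · exact Or.inr (Or.inl h1)
  refine Or.inr (Or.inr ?_)
  rcases hL with rfl | rfl | rfl <;> norm_num at h0 h1 ⊢ <;>
    nlinarith [sq_nonneg (a + b - 1), mul_nonneg ha₁ hb₁, sq_nonneg (a - 1/2), h0, h1,
      mul_nonneg (sub_nonneg.2 ha₂) (sub_nonneg.2 hb₂)]

/-- for ℓ ∈ {1,2,3}, the five ellipses E_{0,0}, E_{±1,0}, E_{0,±1}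
cover the square [−1/2, 1/2]². -/
theorem stmt_7 (ℓ : ℕ) (hℓ : ℓ = 1 ∨ ℓ = 2 ∨ ℓ = 3) (a b : ℝ)
    (ha₁ : -(1/2) ≤ a) (ha₂ : a ≤ 1/2) (hb₁ : -(1/2) ≤ b) (hb₂ : b ≤ 1/2) :
    ∃ δ : ℤ × ℤ, δ ∈ ({(0, 0), (1, 0), (-1, 0), (0, 1), (0, -1)} : Set (ℤ × ℤ)) ∧
      (a + δ.1) ^ 2 + (a + δ.1) * (b + δ.2) + (ℓ : ℝ) * (b + δ.2) ^ 2 ≤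
        (ℓ : ℝ) ^ 2 / (4 * (ℓ : ℝ) - 1) := by
  have hL : (ℓ : ℝ) = 1 ∨ (ℓ : ℝ) = 2 ∨ (ℓ : ℝ) = 3 := by
    rcases hℓ with rfl | rfl | rfl <;> norm_num
  rcases le_or_gt 0 a with ha | ha <;> rcases le_or_gt 0 b with hb | hb
  · -- a ≥ 0, b ≥ 0
    rcases stmt_7_aux _ hL a b ha ha₂ hb hb₂ with h | h | h
    · exact ⟨(0,0), by norm_num, by push_cast; nlinarith [h]⟩
    · exact ⟨(-1,0), by norm_num, by push_cast; nlinarith [h]⟩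
    · exact ⟨(0,-1), by norm_num, by push_cast; nlinarith [h]⟩
  · -- a ≥ 0, b < 0 : (0,0) works
    refine ⟨(0,0), by norm_num, ?_⟩
    push_cast
    rcases hL with h | h | h <;> rw [h] <;>
      nlinarith [mul_nonneg ha (neg_nonneg.2 hb.le), sq_nonneg a, sq_nonneg b,
        mul_nonneg (sub_nonneg.2 ha₂) (by linarith : (0:ℝ) ≤ 1/2 + b),
        mul_nonneg (by linarith : (0:ℝ) ≤ 1/2 - b) (by linarith : (0:ℝ) ≤ 1/2 + b)]
  · -- a < 0, b ≥ 0 : (0,0) works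
    refine ⟨(0,0), by norm_num, ?_⟩
    push_cast
    rcases hL with h | h | h <;> rw [h] <;>
      nlinarith [mul_nonneg (neg_nonneg.2 ha.le) hb, sq_nonneg a, sq_nonneg b,
        mul_nonneg (by linarith : (0:ℝ) ≤ 1/2 + a) (sub_nonneg.2 hb₂),
        mul_nonneg (by linarith : (0:ℝ) ≤ 1/2 - b) (by linarith : (0:ℝ) ≤ 1/2 + b)]
  · -- a < 0, b < 0 : reflect
    rcases stmt_7_aux _ hL (-a) (-b) (by linarith) (by linarith) (by linarith) (by linarith)
      with h | h | h
    · exact ⟨(0,0), by norm_num, by push_cast; nlinarith [h]⟩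
    · exact ⟨(1,0), by norm_num, by push_cast; nlinarith [h]⟩
    · exact ⟨(0,1), by norm_num, by push_cast; nlinarith [h]⟩
end

section
/- Let ℓ ∈ {1, 2, 3} and set M = ℓ²/(4ℓ − 1). For all real numbers x, y there exist integers u, v such that f_ℓ(x − u, y − v) ≤ M. In particular, for every element ξ of ℚ(√(1 − 4ℓ)) there exists γ in the ring of integers with |Norm(ξ − γ)| ≤ M, i.e. the Euclidean minimum of the field is at most M. -/
/-- Key covering lemma: if the point (d,t) in the box [0,1/2]² is outside the
norm-M ellipse centered at the origin, it is inside the one centered at (1/2,1). -/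
lemma stmt8_cover (ℓ : ℕ) (hℓ : ℓ = 1 ∨ ℓ = 2 ∨ ℓ = 3) (d t : ℝ)
    (hd0 : 0 ≤ d) (hd : d ≤ 1/2) (ht0 : 0 ≤ t) (ht : t ≤ 1/2)
    (h : (ℓ : ℝ) ^ 2 / (4 * (ℓ : ℝ) - 1) < d ^ 2 + ((ℓ : ℝ) - 1/4) * t ^ 2) :
    (d - 1/2) ^ 2 + ((ℓ : ℝ) - 1/4) * (t - 1) ^ 2 ≤ (ℓ : ℝ) ^ 2 / (4 * (ℓ : ℝ) - 1) := by
  rcases hℓ with h1 | h1 | h1 <;> subst h1 <;> norm_num at h ⊢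
  · nlinarith [mul_nonneg hd0 ht0,
      mul_nonneg (by linarith : (0:ℝ) ≤ 1/2 - d) (by linarith : (0:ℝ) ≤ 1/2 - t),
      mul_nonneg hd0 (by linarith : (0:ℝ) ≤ 1/2 - t),
      mul_nonneg ht0 (by linarith : (0:ℝ) ≤ 1/2 - d),
      sq_nonneg (d - 1/2), sq_nonneg (t - 1/3), sq_nonneg (d + t - 5/6)]
  · nlinarith [mul_nonneg hd0 ht0,
      mul_nonneg (by linarith : (0:ℝ) ≤ 1/2 - d) (by linarith : (0:ℝ) ≤ 1/2 - t),
      mul_nonneg hd0 (by linarith : (0:ℝ) ≤ 1/2 - t),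
      mul_nonneg ht0 (by linarith : (0:ℝ) ≤ 1/2 - d),
      sq_nonneg (d - 1/2), sq_nonneg (t - 3/7), sq_nonneg (d + t - 13/14)]
  · nlinarith [mul_nonneg hd0 ht0,
      mul_nonneg (by linarith : (0:ℝ) ≤ 1/2 - d) (by linarith : (0:ℝ) ≤ 1/2 - t),
      mul_nonneg hd0 (by linarith : (0:ℝ) ≤ 1/2 - t),
      mul_nonneg ht0 (by linarith : (0:ℝ) ≤ 1/2 - d),
      sq_nonneg (d - 1/2), sq_nonneg (t - 5/11), sq_nonneg (d + t - 21/22)]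

/-- for ℓ ∈ {1,2,3} and M = ℓ²/(4ℓ−1), every real pair (x,y) is
within norm-distance M of an integer pair: ∃ u v ∈ ℤ, f_ℓ(x−u, y−v) ≤ M. -/
theorem stmt_8 (ℓ : ℕ) (hℓ : ℓ = 1 ∨ ℓ = 2 ∨ ℓ = 3) (x y : ℝ) :
    ∃ u v : ℤ, (x - u) ^ 2 + (x - u) * (y - v) + (ℓ : ℝ) * (y - v) ^ 2 ≤
      (ℓ : ℝ) ^ 2 / (4 * (ℓ : ℝ) - 1) := by
  obtain ⟨v1, ht2⟩ : ∃ v : ℤ, |y - (v : ℝ)| ≤ 1/2 := ⟨round y, abs_sub_round y⟩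
  set t : ℝ := y - (v1 : ℝ) with htdef
  obtain ⟨u1, hδ2⟩ : ∃ u : ℤ, |x + t/2 - (u : ℝ)| ≤ 1/2 :=
    ⟨round (x + t/2), abs_sub_round _⟩
  set δ : ℝ := x + t/2 - (u1 : ℝ) with hδdef
  have ht2' : -(1/2) ≤ t ∧ t ≤ 1/2 := abs_le.mp ht2
  have hδ2' : -(1/2) ≤ δ ∧ δ ≤ 1/2 := abs_le.mp hδ2
  by_cases hA : δ ^ 2 + ((ℓ : ℝ) - 1/4) * t ^ 2 ≤ (ℓ : ℝ) ^ 2 / (4 * (ℓ : ℝ) - 1)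
  · refine ⟨u1, v1, ?_⟩
    have e : (x - (u1:ℝ)) ^ 2 + (x - (u1:ℝ)) * (y - (v1:ℝ)) + (ℓ : ℝ) * (y - (v1:ℝ)) ^ 2
        = δ ^ 2 + ((ℓ : ℝ) - 1/4) * t ^ 2 := by
      rw [hδdef, htdef]; ring
    linarith [e]
  · push_neg at hA
    have key := stmt8_cover ℓ hℓ |δ| |t| (abs_nonneg _) hδ2
      (abs_nonneg _) ht2 (by rw [sq_abs, sq_abs]; exact hA)
    rcases le_or_gt 0 t with htp | htn <;> rcases le_or_gt 0 δ with hdp | hdn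
    · refine ⟨u1, v1 + 1, ?_⟩
      have e : (x - (u1:ℝ)) ^ 2 + (x - (u1:ℝ)) * (y - ((v1+1 : ℤ):ℝ)) +
          (ℓ : ℝ) * (y - ((v1+1 : ℤ):ℝ)) ^ 2
          = (δ - 1/2) ^ 2 + ((ℓ : ℝ) - 1/4) * (t - 1) ^ 2 := by
        push_cast; rw [hδdef, htdef]; ring
      rw [abs_of_nonneg hdp, abs_of_nonneg htp] at key
      linarith [e]
    · refine ⟨u1 - 1, v1 + 1, ?_⟩
      have e : (x - ((u1-1 : ℤ):ℝ)) ^ 2 + (x - ((u1-1 : ℤ):ℝ)) * (y - ((v1+1 : ℤ):ℝ)) +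
          (ℓ : ℝ) * (y - ((v1+1 : ℤ):ℝ)) ^ 2
          = (δ + 1/2) ^ 2 + ((ℓ : ℝ) - 1/4) * (t - 1) ^ 2 := by
        push_cast; rw [hδdef, htdef]; ring
      rw [abs_of_neg hdn, abs_of_nonneg htp] at key
      have e2 : (-δ - 1/2) ^ 2 = (δ + 1/2) ^ 2 := by ring
      rw [e2] at key
      linarith [e]
    · refine ⟨u1 + 1, v1 - 1, ?_⟩
      have e : (x - ((u1+1 : ℤ):ℝ)) ^ 2 + (x - ((u1+1 : ℤ):ℝ)) * (y - ((v1-1 : ℤ):ℝ)) +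
          (ℓ : ℝ) * (y - ((v1-1 : ℤ):ℝ)) ^ 2
          = (δ - 1/2) ^ 2 + ((ℓ : ℝ) - 1/4) * (t + 1) ^ 2 := by
        push_cast; rw [hδdef, htdef]; ring
      rw [abs_of_nonneg hdp, abs_of_neg htn] at key
      have e2 : (-t - 1) ^ 2 = (t + 1) ^ 2 := by ring
      rw [e2] at key
      linarith [e]
    · refine ⟨u1, v1 - 1, ?_⟩
      have e : (x - (u1:ℝ)) ^ 2 + (x - (u1:ℝ)) * (y - ((v1-1 : ℤ):ℝ)) +
          (ℓ : ℝ) * (y - ((v1-1 : ℤ):ℝ)) ^ 2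
          = (δ + 1/2) ^ 2 + ((ℓ : ℝ) - 1/4) * (t + 1) ^ 2 := by
        push_cast; rw [hδdef, htdef]; ring
      rw [abs_of_neg hdn, abs_of_neg htn] at key
      have e2 : (-δ - 1/2) ^ 2 = (δ + 1/2) ^ 2 := by ring
      have e3 : (-t - 1) ^ 2 = (t + 1) ^ 2 := by ring
      rw [e2, e3] at key
      linarith [e]
end

section
/- For all integers u, v, one has (1/3 − u)² + (1/3 − u)·(1/3 − v) + (1/3 − v)² ≥ 1/3. That is, the Euclidean minimum of the point (1/3, 1/3) in ℚ(√−3) is at least 1/3 = M(ℚ(√−3)), so the bound M = 1/3 in the division theorem for m = −3 cannot be improved. -/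
/-- the Euclidean minimum of the point (1/3, 1/3) in ℚ(√−3) is at
least 1/3. -/
theorem stmt_10 (u v : ℤ) :
    (1/3 - (u : ℝ)) ^ 2 + (1/3 - (u : ℝ)) * (1/3 - (v : ℝ)) + (1/3 - (v : ℝ)) ^ 2 ≥ 1/3 := by
  have hx : (1 - 3*u) ≠ 0 := by omega
  have hx2 : (1:ℤ) ≤ (1 - 3*u)^2 := by
    have h : 1 ≤ 1 - 3*u ∨ 1 - 3*u ≤ -1 := by omega
    rcases h with h | h <;> nlinarith
  set m : ℤ := 1 - 3*u - 3*v + 3*u^2 + 3*v^2 + 3*u*v with hm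
  have h6 : (1:ℤ) ≤ 6 * m := by
    have : 6 * m = (1-3*u)^2 + (1-3*v)^2 + ((1-3*u)+(1-3*v))^2 := by ring
    nlinarith [sq_nonneg (1-3*v : ℤ), sq_nonneg ((1-3*u)+(1-3*v) : ℤ)]
  have hm1 : (1:ℤ) ≤ m := by omega
  have key : (3:ℤ) ≤ (1-3*u)^2 + (1-3*u)*(1-3*v) + (1-3*v)^2 := by
    have : (1-3*u)^2 + (1-3*u)*(1-3*v) + (1-3*v)^2 = 3 * m := by ring
    omega
  have keyR : (3:ℝ) ≤ (1-3*(u:ℝ))^2 + (1-3*(u:ℝ))*(1-3*(v:ℝ)) + (1-3*(v:ℝ))^2 := by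
    exact_mod_cast key
  nlinarith [keyR]
end

section
/- For all integers u, v, one has (3/11 − u)² + (3/11 − u)·(5/11 − v) + 3·(5/11 − v)² ≥ 9/11. That is, the Euclidean minimum of the point (3/11, 5/11) in ℚ(√−11) is at least 9/11 = M(ℚ(√−11)), so the bound M = 9/11 in the division theorem for m = −11 cannot be improved. -/
/-- the Euclidean minimum of the point (3/11, 5/11) in ℚ(√−11) is
at least 9/11. -/
theorem stmt_12 (u v : ℤ) :
    (3/11 - (u : ℝ)) ^ 2 + (3/11 - (u : ℝ)) * (5/11 - (v : ℝ)) + 3 * (5/11 - (v : ℝ)) ^ 2 ≥ 9/11 := by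
  have heq : (3/11 - (u : ℝ)) ^ 2 + (3/11 - (u : ℝ)) * (5/11 - (v : ℝ))
      + 3 * (5/11 - (v : ℝ)) ^ 2
      = 9/11 + ((u^2 + u*v - u + 3*v^2 - 3*v : ℤ) : ℝ) := by
    push_cast
    ring
  have h0 : (0:ℝ) ≤ (3/11 - (u : ℝ)) ^ 2 + (3/11 - (u : ℝ)) * (5/11 - (v : ℝ))
      + 3 * (5/11 - (v : ℝ)) ^ 2 := by
    nlinarith [sq_nonneg (2*(3/11 - (u:ℝ)) + (5/11 - (v:ℝ))), sq_nonneg (5/11 - (v:ℝ))]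
  have ht : (0:ℤ) ≤ u^2 + u*v - u + 3*v^2 - 3*v := by
    by_contra h
    push_neg at h
    have h1 : u^2 + u*v - u + 3*v^2 - 3*v ≤ -1 := by omega
    have h2 : ((u^2 + u*v - u + 3*v^2 - 3*v : ℤ) : ℝ) ≤ -1 := by exact_mod_cast h1
    linarith [heq ▸ h0]
  have h3 : (0:ℝ) ≤ ((u^2 + u*v - u + 3*v^2 - 3*v : ℤ) : ℝ) := by exact_mod_cast ht
  linarith [heq]
end

section
/- Let K be a number field containing an element α with α² = −7 such that K = ℚ(α) (equivalently, K has degree 2 over ℚ and is generated by α). Then for every ξ ∈ K there exists γ in the ring of integers 𝓞_K such that |Norm_{K/ℚ}(ξ − γ)| ≤ 4/7. In particular K = ℚ(√−7) is norm-Euclidean. -/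
open Polynomial

private lemma stmt14_two_cand (s t : ℚ) (hs0 : 0 ≤ s) (hs : s ≤ 1/2) (ht0 : 0 ≤ t) (ht : t ≤ 1/4) :
    s^2 + 7*t^2 ≤ 4/7 ∨ (s - 1/2)^2 + 7*(t - 1/2)^2 ≤ 4/7 := by
  by_contra h
  push_neg at h
  obtain ⟨h1, h2⟩ := h
  nlinarith [sq_nonneg (s + 7*t - 2), mul_nonneg (sub_nonneg.2 hs) (sub_nonneg.2 ht),
    mul_nonneg hs0 (sub_nonneg.2 ht), mul_nonneg (sub_nonneg.2 hs) ht0,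
    sq_nonneg (s - 1/2), sq_nonneg (t - 3/14)]

private lemma stmt14_rat_key (a b : ℚ) :
    ∃ m n : ℤ, (a - m - n/2)^2 + 7*(b - n/2)^2 ≤ 4/7 := by
  set n₀ : ℤ := round (2*b) with hn0
  have htabs : |b - n₀/2| ≤ 1/4 := by
    have := abs_sub_round (2*b)
    rw [abs_sub_le_iff] at this ⊢
    constructor <;> [linarith [this.1]; linarith [this.2]]
  set m₀ : ℤ := round (a - n₀/2) with hm0
  have hsabs : |a - n₀/2 - m₀| ≤ 1/2 := abs_sub_round _
  set s : ℚ := a - n₀/2 - m₀ with hs'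
  set t : ℚ := b - n₀/2 with ht'
  set ε : ℤ := if 0 ≤ t then 1 else -1 with hε
  set m₁ : ℤ := m₀ + (if 0 ≤ s then 0 else -1) + (if 0 ≤ t then 0 else 1) with hm1
  set n₁ : ℤ := n₀ + ε with hn1
  have key : s^2 + 7*t^2 ≤ 4/7 ∨
      (a - m₁ - n₁/2)^2 + 7*(b - n₁/2)^2 ≤ 4/7 := by
    rcases le_or_gt 0 s with hs0 | hs0 <;> rcases le_or_gt 0 t with ht0 | ht0
    · have := stmt14_two_cand s t hs0 (by rw [abs_of_nonneg hs0] at hsabs; linarith)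
        ht0 (by rw [abs_of_nonneg ht0] at htabs; linarith)
      rcases this with h | h
      · exact Or.inl h
      · refine Or.inr ?_
        have e1 : a - m₁ - n₁/2 = s - 1/2 := by
          simp only [hm1, hn1, hε, if_pos hs0, if_pos ht0]; push_cast; linarith [hs'.symm]
        have e2 : b - n₁/2 = t - 1/2 := by
          simp only [hn1, hε, if_pos ht0]; push_cast; linarith [ht'.symm]
        rw [e1, e2]; exact h
    · have := stmt14_two_cand s (-t) hs0 (by rw [abs_of_nonneg hs0] at hsabs; linarith)
        (by linarith) (by rw [abs_of_neg ht0] at htabs; linarith)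
      rcases this with h | h
      · exact Or.inl (by nlinarith)
      · refine Or.inr ?_
        have e1 : a - m₁ - n₁/2 = s - 1/2 := by
          simp only [hm1, hn1, hε, if_pos hs0, if_neg (not_le.2 ht0)]; push_cast
          linarith [hs'.symm]
        have e2 : b - n₁/2 = t + 1/2 := by
          simp only [hn1, hε, if_neg (not_le.2 ht0)]; push_cast; linarith [ht'.symm]
        rw [e1, e2]; nlinarith
    · have := stmt14_two_cand (-s) t (by linarith) (by rw [abs_of_neg hs0] at hsabs; linarith)
        ht0 (by rw [abs_of_nonneg ht0] at htabs; linarith)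
      rcases this with h | h
      · exact Or.inl (by nlinarith)
      · refine Or.inr ?_
        have e1 : a - m₁ - n₁/2 = s + 1/2 := by
          simp only [hm1, hn1, hε, if_neg (not_le.2 hs0), if_pos ht0]; push_cast
          linarith [hs'.symm]
        have e2 : b - n₁/2 = t - 1/2 := by
          simp only [hn1, hε, if_pos ht0]; push_cast; linarith [ht'.symm]
        rw [e1, e2]; nlinarith
    · have := stmt14_two_cand (-s) (-t) (by linarith) (by rw [abs_of_neg hs0] at hsabs; linarith)
        (by linarith) (by rw [abs_of_neg ht0] at htabs; linarith)
      rcases this with h | h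
      · exact Or.inl (by nlinarith)
      · refine Or.inr ?_
        have e1 : a - m₁ - n₁/2 = s + 1/2 := by
          simp only [hm1, hn1, hε, if_neg (not_le.2 hs0), if_neg (not_le.2 ht0)]; push_cast
          linarith [hs'.symm]
        have e2 : b - n₁/2 = t + 1/2 := by
          simp only [hn1, hε, if_neg (not_le.2 ht0)]; push_cast; linarith [ht'.symm]
        rw [e1, e2]; nlinarith
  rcases key with h | h
  · refine ⟨m₀, n₀, ?_⟩
    have e : a - m₀ - n₀/2 = s := by rw [hs']; ring
    rw [e]; exact h
  · exact ⟨m₁, n₁, h⟩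

/-- if K = ℚ(α) with α² = −7, then every ξ ∈ K is within
norm-distance 4/7 of an algebraic integer: ℚ(√−7) is norm-Euclidean with
Euclidean minimum bound 4/7. -/
theorem stmt_14 (K : Type*) [Field K] [NumberField K] (α : K)
    (hα : α ^ 2 = -7) (hgen : Algebra.adjoin ℚ {α} = ⊤) (ξ : K) :
    ∃ γ : NumberField.RingOfIntegers K,
      |Algebra.norm ℚ (ξ - (γ : K))| ≤ 4/7 := by
  have hαα : α * α = -7 := by rw [← sq]; exact hα
  have hint : IsIntegral ℚ α := IsIntegral.of_finite ℚ α
  have hirr : Irreducible (X ^ 2 + C (7:ℚ)) := by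
    have := X_pow_sub_C_irreducible_of_prime Nat.prime_two
      (a := (-7 : ℚ)) (fun b hb => by nlinarith [sq_nonneg b, hb])
    simpa [sub_neg_eq_add, map_neg] using this
  have hmin : minpoly ℚ α = X ^ 2 + C 7 :=
    (minpoly.eq_of_irreducible_of_monic hirr (by simp [hα]) (by monicity!)).symm
  let e : Algebra.adjoin ℚ {α} ≃ₐ[ℚ] K :=
    (Subalgebra.equivOfEq _ _ hgen).trans Subalgebra.topEquiv
  let pb : PowerBasis ℚ K := (Algebra.adjoin.powerBasis hint).map e
  have hgenpb : pb.gen = α := by simp [pb, e]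
  have hdim : pb.dim = 2 := by simp [pb, hmin]
  let B : Module.Basis (Fin 2) ℚ K := pb.basis.reindex (finCongr hdim)
  have hB : ∀ i : Fin 2, B i = α ^ (i : ℕ) := by
    intro i
    simp [B, Module.Basis.reindex_apply, PowerBasis.coe_basis, hgenpb]
  have hB0 : B 0 = 1 := by simpa using hB 0
  have hB1 : B 1 = α := by simpa using hB 1
  -- norm formula
  have key : ∀ p q : ℚ, Algebra.norm ℚ (p • B 0 + q • B 1) = p^2 + 7*q^2 := by
    intro p q
    have h0 : (p • B 0 + q • B 1) * B 0 = p • B 0 + q • B 1 := by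
      rw [hB0, mul_one]
    have h1 : (p • B 0 + q • B 1) * B 1 = (-7*q) • B 0 + p • B 1 := by
      rw [hB0, hB1]
      simp only [Algebra.smul_def, map_mul, map_neg, map_ofNat, mul_one]
      ring_nf
      linear_combination (algebraMap ℚ K q) * hαα
    rw [Algebra.norm_eq_matrix_det B, Matrix.det_fin_two]
    simp only [Algebra.leftMulMatrix_eq_repr_mul, h0, h1, map_add, map_smul,
      Module.Basis.repr_self, Finsupp.smul_single, smul_eq_mul, mul_one,
      Finsupp.add_apply, Finsupp.single_apply]
    norm_num
    ring
  -- ω = (1+α)/2 is integral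
  set ω : K := (1 + α) / 2 with hω
  have hωeq : ω ^ 2 - ω + 2 = 0 := by
    rw [hω]
    field_simp
    linear_combination hα
  have hωint : IsIntegral ℤ ω := by
    refine ⟨X ^ 2 - X + C 2, by monicity!, ?_⟩
    have : (Polynomial.aeval ω) ((X ^ 2 - X + C 2 : ℤ[X])) = ω ^ 2 - ω + 2 := by
      simp [map_ofNat]
    rw [← Polynomial.aeval_def, this, hωeq]
  -- decompose ξ
  set a : ℚ := B.repr ξ 0 with ha
  set b : ℚ := B.repr ξ 1 with hb
  have hξ : ξ = a • B 0 + b • B 1 := by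
    conv_lhs => rw [← B.sum_repr ξ]
    rw [Fin.sum_univ_two]
  obtain ⟨m, n, hmn⟩ := stmt14_rat_key a b
  refine ⟨(m : NumberField.RingOfIntegers K) + (n : NumberField.RingOfIntegers K) * ⟨ω, hωint⟩, ?_⟩
  have hγcoe : (((m : NumberField.RingOfIntegers K)
      + (n : NumberField.RingOfIntegers K) * ⟨ω, hωint⟩ : NumberField.RingOfIntegers K) : K)
      = (m : K) + (n : K) * ω := by
    push_cast [NumberField.RingOfIntegers.coe_eq_algebraMap]
    rfl
  rw [hγcoe, hξ]
  have hdecomp : a • B 0 + b • B 1 - ((m : K) + (n : K) * ω)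
      = (a - m - (n:ℚ)/2) • B 0 + (b - (n:ℚ)/2) • B 1 := by
    rw [hB0, hB1, hω]
    simp only [Algebra.smul_def, mul_one, map_sub, map_div₀, map_intCast, map_ofNat]
    ring
  rw [hdecomp, key]
  rw [abs_of_nonneg (by positivity)]
  exact hmn
end

section
/- Let K be a number field containing an element α with α² = −11 such that K = ℚ(α) (equivalently, K has degree 2 over ℚ and is generated by α). Then for every ξ ∈ K there exists γ in the ring of integers 𝓞_K such that |Norm_{K/ℚ}(ξ − γ)| ≤ 9/11. In particular K = ℚ(√−11) is norm-Euclidean. -/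
open Polynomial

lemma key_quadrant (s t : ℚ) (hs2 : s ≤ 1/2) (hss : 0 ≤ s) (ht2 : t ≤ 1/4) (hts : 0 ≤ t)
    (h : 9/11 < s^2 + 11*t^2) : (s - 1/2)^2 + 11*(t - 1/2)^2 ≤ 9/11 := by
  have ht5 : 5/22 ≤ t := by
    by_contra hc
    push_neg at hc
    nlinarith [mul_nonneg hts (by linarith : (0:ℚ) ≤ 5/22 - t), mul_nonneg hss hss, mul_nonneg hts hts, mul_nonneg hss (by linarith : (0:ℚ) ≤ 1/2 - s)]
  have p1 : 0 ≤ (1/2 - s) * s := mul_nonneg (by linarith) hss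
  have p2 : 0 ≤ (1/4 - t) * (t - 5/22) := mul_nonneg (by linarith) (by linarith)
  nlinarith [h, p1, p2]

lemma key (x y : ℚ) : ∃ m n : ℤ, (x - m - n/2)^2 + 11*(y - n/2)^2 ≤ 9/11 := by
  set n₀ : ℤ := round (2*y) with hn₀
  have ht : |y - n₀/2| ≤ 1/4 := by
    have := abs_sub_round (2*y)
    rw [abs_sub_le_iff] at this ⊢
    constructor <;> linarith [this.1, this.2]
  set m₀ : ℤ := round (x - n₀/2) with hm₀
  have hs : |x - n₀/2 - m₀| ≤ 1/2 := abs_sub_round _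
  set s : ℚ := x - n₀/2 - m₀ with hsdef
  set t : ℚ := y - n₀/2 with htdef
  by_cases h : s^2 + 11*t^2 ≤ 9/11
  · exact ⟨m₀, n₀, by rw [show x - m₀ - n₀/2 = s by rw [hsdef]; ring]; exact h⟩
  push_neg at h
  rw [abs_le] at ht hs
  obtain ⟨ht1, ht2⟩ := ht
  obtain ⟨hs1, hs2⟩ := hs
  rcases le_or_gt 0 s with hss | hss <;> rcases le_or_gt 0 t with hts | hts
  · refine ⟨m₀, n₀ + 1, ?_⟩
    have e1 : x - (m₀:ℚ) - ((n₀+1:ℤ):ℚ)/2 = s - 1/2 := by push_cast; rw [hsdef]; ring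
    have e2 : y - ((n₀+1:ℤ):ℚ)/2 = t - 1/2 := by push_cast; rw [htdef]; ring
    rw [e1, e2]
    exact key_quadrant s t hs2 hss ht2 hts (by linarith)
  · refine ⟨m₀ + 1, n₀ - 1, ?_⟩
    have e1 : x - ((m₀+1:ℤ):ℚ) - ((n₀-1:ℤ):ℚ)/2 = s - 1/2 := by push_cast; rw [hsdef]; ring
    have e2 : y - ((n₀-1:ℤ):ℚ)/2 = t + 1/2 := by push_cast; rw [htdef]; ring
    rw [e1, e2]
    have := key_quadrant s (-t) hs2 hss (by linarith) (by linarith) (by nlinarith)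
    nlinarith [this]
  · refine ⟨m₀ - 1, n₀ + 1, ?_⟩
    have e1 : x - ((m₀-1:ℤ):ℚ) - ((n₀+1:ℤ):ℚ)/2 = s + 1/2 := by push_cast; rw [hsdef]; ring
    have e2 : y - ((n₀+1:ℤ):ℚ)/2 = t - 1/2 := by push_cast; rw [htdef]; ring
    rw [e1, e2]
    have := key_quadrant (-s) t (by linarith) (by linarith) ht2 hts (by nlinarith)
    nlinarith [this]
  · refine ⟨m₀, n₀ - 1, ?_⟩
    have e1 : x - (m₀:ℚ) - ((n₀-1:ℤ):ℚ)/2 = s + 1/2 := by push_cast; rw [hsdef]; ring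
    have e2 : y - ((n₀-1:ℤ):ℚ)/2 = t + 1/2 := by push_cast; rw [htdef]; ring
    rw [e1, e2]
    have := key_quadrant (-s) (-t) (by linarith) (by linarith) (by linarith) (by linarith) (by nlinarith)
    nlinarith [this]

/-- if K = ℚ(α) with α² = −11, then every ξ ∈ K is within
norm-distance 9/11 of an algebraic integer: ℚ(√−11) is norm-Euclidean with
Euclidean minimum bound 9/11. -/
theorem stmt_15 (K : Type*) [Field K] [NumberField K] (α : K)
    (hα : α ^ 2 = -11) (hgen : Algebra.adjoin ℚ {α} = ⊤) (ξ : K) :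
    ∃ γ : NumberField.RingOfIntegers K,
      |Algebra.norm ℚ (ξ - (γ : K))| ≤ 9/11 := by
  have hint : IsIntegral ℚ α := IsIntegral.of_finite ℚ α
  have hroot : Polynomial.aeval α (X^2 + C (11:ℚ)) = 0 := by simp [hα]
  have hdvd : minpoly ℚ α ∣ X^2 + C (11:ℚ) := minpoly.dvd ℚ α hroot
  have hnotrange : α ∉ (algebraMap ℚ K).range := by
    rintro ⟨c, rfl⟩
    have h2 : c^2 = -11 := by
      apply (algebraMap ℚ K).injective
      rw [map_pow, hα]
      simp
    nlinarith [sq_nonneg c]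
  have h2le : 2 ≤ (minpoly ℚ α).natDegree := by
    rw [minpoly.two_le_natDegree_iff hint]; exact hnotrange
  have hmono : (X^2 + C (11:ℚ)).Monic := monic_X_pow_add_C _ (by norm_num)
  have hmp : minpoly ℚ α = X^2 + C (11:ℚ) := by
    obtain ⟨r, hr⟩ := hdvd
    have hpm : (minpoly ℚ α).Monic := minpoly.monic hint
    have hrm : r.Monic := hpm.of_mul_monic_left (hr ▸ hmono)
    have hdeg : (minpoly ℚ α).natDegree + r.natDegree = 2 := by
      have h := congrArg Polynomial.natDegree hr
      rw [Polynomial.natDegree_mul hpm.ne_zero hrm.ne_zero, natDegree_X_pow_add_C] at h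
      exact h.symm
    have hr1 : r = 1 := hrm.natDegree_eq_zero.mp (by omega)
    rw [hr, hr1, mul_one]
  have hd2 : (minpoly ℚ α).natDegree = 2 := by rw [hmp, natDegree_X_pow_add_C]
  let pb : PowerBasis ℚ K := (Algebra.adjoin.powerBasis hint).map
    ((Subalgebra.equivOfEq _ _ hgen).trans Subalgebra.topEquiv)
  have hpbgen : pb.gen = α := rfl
  have hpbdim : pb.dim = 2 := hd2
  let b : Module.Basis (Fin 2) ℚ K := pb.basis.reindex (finCongr hpbdim)
  have hb0 : b 0 = 1 := by
    simp [b, Module.Basis.reindex_apply, pb.basis_eq_pow]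
  have hb1 : b 1 = α := by
    simp [b, Module.Basis.reindex_apply, pb.basis_eq_pow, hpbgen]
  -- repr of combinations
  have hrepr : ∀ (a c : ℚ) (i : Fin 2), b.repr (a • b 0 + c • b 1) i = ![a, c] i := by
    intro a c i
    rw [map_add, map_smul, map_smul, b.repr_self, b.repr_self]
    fin_cases i <;> simp
  -- norm formula
  have hnorm : ∀ a c : ℚ, Algebra.norm ℚ (a • (1:K) + c • α) = a^2 + 11*c^2 := by
    intro a c
    rw [Algebra.norm_eq_matrix_det b, Matrix.det_fin_two]
    have e0 : (a • (1:K) + c • α) * b 0 = a • b 0 + c • b 1 := by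
      rw [hb0, hb1, mul_one]
    have e1 : (a • (1:K) + c • α) * b 1 = (-(11*c)) • b 0 + a • b 1 := by
      rw [hb0, hb1]
      have h11 : (-(11:ℚ)) • (1:K) = -11 := by
        rw [Rat.smul_one_eq_cast]; push_cast; ring
      rw [add_mul, smul_mul_assoc, smul_mul_assoc, one_mul, ← pow_two, hα]
      rw [← h11, smul_smul]
      module
    rw [Algebra.leftMulMatrix_eq_repr_mul, Algebra.leftMulMatrix_eq_repr_mul,
        Algebra.leftMulMatrix_eq_repr_mul, Algebra.leftMulMatrix_eq_repr_mul,
        e0, e1, hrepr, hrepr, hrepr, hrepr]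
    simp
    ring
  -- coordinates of ξ
  have hx := b.sum_repr ξ
  rw [Fin.sum_univ_two] at hx
  set xq : ℚ := b.repr ξ 0 with hxq
  set yq : ℚ := b.repr ξ 1 with hyq
  -- θ integral
  set θ : K := (1 + α) / 2 with hθdef
  have hθrel : θ^2 - θ + 3 = 0 := by
    rw [hθdef]
    field_simp
    linear_combination hα
  have hθint : IsIntegral ℤ θ := by
    refine ⟨X^2 - X + C 3, ?_, ?_⟩
    · have : (X^2 - X + C (3:ℤ)) = X^2 + (C 3 - X) := by ring
      rw [this]
      apply Polynomial.monic_X_pow_add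
      refine lt_of_le_of_lt (Polynomial.degree_sub_le _ _) ?_
      rw [Polynomial.degree_X, Polynomial.degree_C (by norm_num : (3:ℤ) ≠ 0)]
      decide
    · show Polynomial.eval₂ (algebraMap ℤ K) θ (X^2 - X + C 3) = 0
      rw [eval₂_add, eval₂_sub, eval₂_pow, eval₂_X, eval₂_C,
        show (algebraMap ℤ K) 3 = 3 by simp]
      exact hθrel
  obtain ⟨m, n, hmn⟩ := key xq yq
  have hγint : IsIntegral ℤ ((m:K) + (n:K) * θ) := by
    have h1 : IsIntegral ℤ ((m:K)) := by
      have := isIntegral_algebraMap (R := ℤ) (A := K) (x := m)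
      rwa [algebraMap_int_eq, eq_intCast] at this
    have h2 : IsIntegral ℤ ((n:K)) := by
      have := isIntegral_algebraMap (R := ℤ) (A := K) (x := n)
      rwa [algebraMap_int_eq, eq_intCast] at this
    exact h1.add (h2.mul hθint)
  refine ⟨⟨(m:K) + (n:K) * θ, hγint⟩, ?_⟩
  show |Algebra.norm ℚ (ξ - ((m:K) + (n:K) * θ))| ≤ 9/11
  have hdiff : ξ - ((m:K) + (n:K) * θ) = (xq - m - n/2) • (1:K) + (yq - n/2) • α := by
    rw [← hx, hb0, hb1, hθdef]
    simp only [Algebra.smul_def, eq_ratCast]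
    push_cast
    field_simp
    ring
  rw [hdiff, hnorm]
  rw [abs_of_nonneg (by positivity)]
  exact hmn
end
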